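/- arXiv:1309.6732 — 6 statements merged into one kernel-verified Lean document; each statement's English description precedes it below -/
import Mathlib

section
/- Let M ≥ 2 be an integer and let g > 0, ρ > 0. Let E and S be independent real random variables on a probability space, where E has the exponential distribution with rate 1 and S has the Gamma distribution with shape M−1 and rate 1. Then for every x > 0, P( E / ((gρ)^{-1} + S) ≤ x ) = 1 − e^{−x/(gρ)} / (1+x)^{M−1}. -/
open MeasureTheory ProbabilityTheory Real

/-!
Conditionally on `S`, the event is `E ≤ x (c + S)` with `c = (gρ)⁻¹`, of probability
`1 - e^{-x(c + S)}` since `E ~ Exp(1)`. Averaging over `S` gives `1 - e^{-xc} 𝔼[e^{-xS}]`, and the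
Laplace transform of `Gamma(a, 1)` at `x` is `(1 + x)^{-a}`.
-/

namespace ProbabilityTheory

lemma measureReal_le_comp_eq_integral_cdf {Ω β : Type*} [MeasurableSpace Ω] [MeasurableSpace β]
    {P : Measure Ω} [IsProbabilityMeasure P] {X : Ω → ℝ} {Y : Ω → β}
    (hX : Measurable X) (hY : Measurable Y) (hXY : IndepFun X Y P) {f : β → ℝ}
    (hf : Measurable f) :
    P.real {ω | X ω ≤ f (Y ω)} = ∫ y, cdf (P.map X) (f y) ∂P.map Y := by
  have : IsProbabilityMeasure (P.map X) := Measure.isProbabilityMeasure_map hX.aemeasurable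
  have hs : MeasurableSet {p : ℝ × β | p.1 ≤ f p.2} :=
    measurableSet_le measurable_fst (hf.comp measurable_snd)
  have hlaw : P.map (fun ω ↦ (X ω, Y ω)) = (P.map X).prod (P.map Y) :=
    (indepFun_iff_map_prod_eq_prod_map_map hX.aemeasurable hY.aemeasurable).mp hXY
  rw [integral_eq_lintegral_of_nonneg_ae (.of_forall fun _ ↦ cdf_nonneg _ _)
      ((cdf _).mono.measurable.comp hf).aestronglyMeasurable]
  simp only [ofReal_cdf]
  rw [measureReal_def,
    show {ω | X ω ≤ f (Y ω)} = (fun ω ↦ (X ω, Y ω)) ⁻¹' {p | p.1 ≤ f p.2} from rfl,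
    ← Measure.map_apply (hX.prodMk hY) hs, hlaw, Measure.prod_apply_symm hs]
  rfl

lemma gammaMeasure_Iio_zero (a r : ℝ) : gammaMeasure a r (Set.Iio 0) = 0 := by
  rw [gammaMeasure, withDensity_apply _ measurableSet_Iio, lintegral_gammaPDF_of_nonpos le_rfl]

lemma ae_nonneg_gammaMeasure (a r : ℝ) : ∀ᵐ s ∂gammaMeasure a r, 0 ≤ s :=
  measure_mono_null (fun s (hs : ¬0 ≤ s) ↦ Set.mem_Iio.mpr (not_le.mp hs))
    (gammaMeasure_Iio_zero a r)

lemma integral_exp_neg_mul_gammaMeasure {a r t : ℝ} (ha : 0 < a) (hr : 0 < r) (ht : 0 < r + t) :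
    ∫ s, exp (-(t * s)) ∂gammaMeasure a r = (r / (r + t)) ^ a := by
  have hdensity : ∀ s, (gammaPDF a r s).toReal • exp (-(t * s)) = Set.indicator (Set.Ici 0)
      (fun s ↦ r ^ a / Gamma a * (s ^ (a - 1) * exp (-((r + t) * s)))) s := by
    intro s
    rw [gammaPDF, ENNReal.toReal_ofReal (gammaPDFReal_nonneg ha hr s), smul_eq_mul, gammaPDFReal]
    split_ifs with hs
    · rw [Set.indicator_of_mem (Set.mem_Ici.mpr hs), add_mul, neg_add, exp_add]
      ring
    · rw [Set.indicator_of_notMem (by simpa using hs), zero_mul]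
  rw [gammaMeasure, integral_withDensity_eq_integral_toReal_smul (f := gammaPDF a r)
    (measurable_gammaPDFReal a r).ennreal_ofReal (.of_forall fun _ ↦ ENNReal.ofReal_lt_top)]
  simp_rw [hdensity]
  rw [integral_indicator measurableSet_Ici, integral_Ici_eq_integral_Ioi, integral_const_mul,
    integral_rpow_mul_exp_neg_mul_Ioi ha ht, div_rpow hr.le ht.le, one_div, inv_rpow ht.le]
  field_simp [(Gamma_pos_of_pos ha).ne']

lemma integrable_exp_neg_mul_gammaMeasure {a r t : ℝ} (ha : 0 < a) (hr : 0 < r)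
    (ht : 0 < r + t) : Integrable (fun s ↦ exp (-(t * s))) (gammaMeasure a r) :=
  .of_integral_ne_zero <| by
    rw [integral_exp_neg_mul_gammaMeasure ha hr ht]
    exact (rpow_pos_of_pos (div_pos hr ht) a).ne'

end ProbabilityTheory

/-- The conditional beam SINR distribution given path loss `g`: if `E ~ Exp(1)` and
`S ~ Gamma(M-1, 1)` are independent, then for `x > 0`,
`P(E / ((gρ)⁻¹ + S) ≤ x) = 1 - exp(-x/(gρ)) / (1+x)^(M-1)`. -/
theorem beam_sinr_cdf_given_pathloss
    {Ω : Type*} [MeasurableSpace Ω] (P : Measure Ω) [IsProbabilityMeasure P]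
    (M : ℕ) (hM : 2 ≤ M) (g ρ : ℝ) (hg : 0 < g) (hρ : 0 < ρ)
    (E S : Ω → ℝ) (hEm : Measurable E) (hSm : Measurable S)
    (hindep : IndepFun E S P)
    (hE : P.map E = expMeasure 1)
    (hS : P.map S = gammaMeasure ((M : ℝ) - 1) 1) :
    ∀ x : ℝ, 0 < x →
      (P {ω | E ω / ((g * ρ)⁻¹ + S ω) ≤ x}).toReal
        = 1 - Real.exp (-x / (g * ρ)) / (1 + x) ^ (M - 1) := by
  intro x hx
  set c := (g * ρ)⁻¹
  have hc : 0 < c := by positivity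
  have hM' : ((M - 1 : ℕ) : ℝ) = (M : ℝ) - 1 := by rw [Nat.cast_sub (by omega), Nat.cast_one]
  have ha : 0 < (M : ℝ) - 1 := by rw [← hM']; exact_mod_cast (by omega : 0 < M - 1)
  have hS_nonneg : ∀ᵐ ω ∂P, 0 ≤ S ω :=
    ae_of_ae_map hSm.aemeasurable (hS ▸ ae_nonneg_gammaMeasure _ _)
  have hevent : {ω | E ω / (c + S ω) ≤ x} =ᵐ[P] {ω | E ω ≤ x * (c + S ω)} := by
    filter_upwards [hS_nonneg] with ω hω
    change (E ω / (c + S ω) ≤ x) = (E ω ≤ x * (c + S ω))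
    rw [div_le_iff₀ (by positivity), mul_comm]
  calc P.real {ω | E ω / (c + S ω) ≤ x}
      = P.real {ω | E ω ≤ x * (c + S ω)} := measureReal_congr hevent
    _ = ∫ s, cdf (expMeasure 1) (x * (c + s)) ∂gammaMeasure ((M : ℝ) - 1) 1 := by
      rw [measureReal_le_comp_eq_integral_cdf (f := fun s ↦ x * (c + s)) hEm hSm hindep
        (by fun_prop), hE, hS]
    _ = ∫ s, (1 - exp (-(x * c)) * exp (-(x * s))) ∂gammaMeasure ((M : ℝ) - 1) 1 := by
      refine integral_congr_ae ?_
      filter_upwards [ae_nonneg_gammaMeasure _ _] with s hs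
      rw [cdf_expMeasure_eq one_pos, if_pos (by positivity), one_mul, mul_add, neg_add, exp_add]
    _ = 1 - exp (-(x * c)) * (1 / (1 + x)) ^ ((M : ℝ) - 1) := by
      have := isProbabilityMeasure_gammaMeasure ha one_pos
      rw [integral_sub (integrable_const 1) ((integrable_exp_neg_mul_gammaMeasure ha one_pos
        (by linarith)).const_mul _), integral_const, integral_const_mul,
        integral_exp_neg_mul_gammaMeasure ha one_pos (by linarith)]
      simp
    _ = 1 - exp (-x / (g * ρ)) / (1 + x) ^ (M - 1) := by
      rw [one_div, inv_rpow (by positivity), ← hM', rpow_natCast, neg_div, div_eq_mul_inv x]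
      rfl
end

section
/- (Theorem 2, outage capacity for the unbounded path loss model: existence, uniqueness, and outage identity.) Let α > 2, let M ≥ 1 be an integer, let ε ∈ (0,1), λ > 0, ρ > 0, and set a = (α/2)(M−1) and b = (2λπ/α) Γ(2/α) ρ^{2/α}, where Γ is the Gamma function. Then there exists a unique y* ∈ (1, ∞) satisfying (y*)^{a+1} − (y*)^{a} = ( b / (−log ε) )^{α/2}. Moreover, this y* satisfies exp( −(2λπ/α) (y*)^{1−M} ( ρ / (y*−1) )^{2/α} Γ(2/α) ) = ε; that is, the rate log y* achieves outage probability exactly ε under the large-system beam outage distribution F(x) = exp( −(2λπ/α)(x+1)^{1−M}(ρ/x)^{2/α} Γ(2/α) ) of the unbounded path loss model. -/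
open Real

/-- Theorem 2 (unbounded path loss: existence, uniqueness, and outage identity). There is a
unique `y* ∈ (1,∞)` with `y*^(a+1) - y*^a = (b/(-log ε))^(α/2)`, and this `y*` satisfies
`exp(-(2λπ/α) y*^{1-M} (ρ/(y*-1))^{2/α} Γ(2/α)) = ε`, so the rate `log y*` achieves outage
probability exactly `ε` in the large system limit. -/
theorem outage_capacity_unbounded_root
    (α : ℝ) (hα : 2 < α) (M : ℕ) (hM : 1 ≤ M) (ε lam ρ : ℝ)
    (hε : ε ∈ Set.Ioo (0 : ℝ) 1) (hlam : 0 < lam) (hρ : 0 < ρ)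
    (a b : ℝ) (ha : a = α / 2 * ((M : ℝ) - 1))
    (hb : b = 2 * lam * π / α * Real.Gamma (2 / α) * ρ ^ (2 / α)) :
    (∃! y : ℝ, y ∈ Set.Ioi (1 : ℝ) ∧
        y ^ (a + 1) - y ^ a = (b / (-Real.log ε)) ^ (α / 2)) ∧
    ∀ y ∈ Set.Ioi (1 : ℝ),
      y ^ (a + 1) - y ^ a = (b / (-Real.log ε)) ^ (α / 2) →
      Real.exp (-(2 * lam * π / α) * y ^ ((1 : ℝ) - M) * (ρ / (y - 1)) ^ (2 / α) *
          Real.Gamma (2 / α)) = ε := by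
  obtain ⟨hε0, hε1⟩ := hε
  have hα0 : (0:ℝ) < α := by linarith
  have hL : 0 < -Real.log ε := by
    have := Real.log_neg hε0 hε1; linarith
  set L : ℝ := -Real.log ε with hLdef
  have hΓ : 0 < Real.Gamma (2/α) := Real.Gamma_pos_of_pos (by positivity)
  have hb0 : 0 < b := by
    rw [hb]
    have : 0 < ρ ^ (2/α) := Real.rpow_pos_of_pos hρ _
    have hπ := Real.pi_pos
    positivity
  set c : ℝ := (b / L) ^ (α/2) with hcdef
  have hc0 : 0 < c := Real.rpow_pos_of_pos (div_pos hb0 hL) _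
  have hM1 : (1:ℝ) ≤ (M:ℝ) := by exact_mod_cast hM
  have ha0 : 0 ≤ a := by
    rw [ha]; nlinarith
  have key : ∀ y : ℝ, 0 < y → y ^ (a+1) - y^a = y^a * (y-1) := by
    intro y hy
    rw [Real.rpow_add_one (ne_of_gt hy)]
    ring
  have hmono : StrictMonoOn (fun y : ℝ => y^a * (y-1)) (Set.Ici 1) := by
    intro x hx z _ hxz
    have hx1 : (1:ℝ) ≤ x := hx
    have hx0 : 0 < x := by linarith
    have h1 : x^a * (x-1) < x^a * (z-1) :=
      mul_lt_mul_of_pos_left (by linarith) (Real.rpow_pos_of_pos hx0 a)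
    have h2 : x^a * (z-1) ≤ z^a * (z-1) :=
      mul_le_mul_of_nonneg_right (Real.rpow_le_rpow hx0.le hxz.le ha0) (by linarith)
    exact lt_of_lt_of_le h1 h2
  -- main identity
  have main : ∀ y ∈ Set.Ioi (1:ℝ), y^a * (y-1) = c →
      Real.exp (-(2 * lam * π / α) * y ^ ((1 : ℝ) - M) * (ρ / (y - 1)) ^ (2 / α) *
          Real.Gamma (2 / α)) = ε := by
    intro y hy heq
    have hy1 : 1 < y := hy
    have hy0 : 0 < y := by linarith
    have hym : 0 < y - 1 := by linarith
    have hbL : 0 ≤ b / L := (div_pos hb0 hL).le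
    have hcpow : c ^ (2/α) = b / L := by
      rw [hcdef, ← Real.rpow_mul hbL, show α/2*(2/α) = 1 by field_simp, Real.rpow_one]
    have hleft : (y^a*(y-1))^(2/α) = y^((M:ℝ)-1) * (y-1)^(2/α) := by
      rw [Real.mul_rpow (Real.rpow_nonneg hy0.le a) hym.le, ← Real.rpow_mul hy0.le,
        show a*(2/α) = (M:ℝ)-1 by rw [ha]; field_simp]
    have hBL : y^((M:ℝ)-1) * (y-1)^(2/α) = b / L := by
      rw [← hleft, heq, hcpow]
    set P : ℝ := y^((M:ℝ)-1) with hPdef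
    set Q : ℝ := (y-1)^(2/α) with hQdef
    have hP0 : 0 < P := Real.rpow_pos_of_pos hy0 _
    have hQ0 : 0 < Q := Real.rpow_pos_of_pos hym _
    have hLval : L = b / (P * Q) := by
      field_simp at hBL ⊢
      linarith [hBL]
    have hinv : y ^ ((1:ℝ) - M) = P⁻¹ := by
      rw [hPdef, show (1:ℝ) - M = -((M:ℝ)-1) by ring, Real.rpow_neg hy0.le]
    have hdiv : (ρ / (y-1)) ^ (2/α) = ρ ^ (2/α) / Q := by
      rw [hQdef, Real.div_rpow hρ.le hym.le]
    rw [hinv, hdiv]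
    rw [show ε = Real.exp (Real.log ε) from (Real.exp_log hε0).symm]
    congr 1
    have hlog : Real.log ε = -L := by rw [hLdef]; ring
    rw [hlog, hLval, hb]
    field_simp
  constructor
  · -- existence and uniqueness
    have hcont : ContinuousOn (fun y : ℝ => y^a * (y-1)) (Set.Icc 1 (c+2)) := by
      apply ContinuousOn.mul
      · apply ContinuousOn.rpow_const continuousOn_id
        intro x hx
        exact Or.inl (ne_of_gt (lt_of_lt_of_le one_pos hx.1))
      · exact (continuous_id.sub continuous_const).continuousOn
    have hT : (1:ℝ) ≤ c + 2 := by linarith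
    have hiv := intermediate_value_Icc hT hcont
    have hmem : c ∈ Set.Icc ((fun y:ℝ => y^a*(y-1)) 1) ((fun y:ℝ => y^a*(y-1)) (c+2)) := by
      constructor
      · simp [hc0.le]
      · have h1 : (1:ℝ) ≤ (c+2)^a := by
          calc (1:ℝ) = 1^a := (Real.one_rpow a).symm
          _ ≤ (c+2)^a := Real.rpow_le_rpow zero_le_one (by linarith) ha0
        show c ≤ (c+2)^a * ((c+2)-1)
        nlinarith
    obtain ⟨y0, hy0mem, hy0eq⟩ := hiv hmem
    have hy0ne : y0 ≠ 1 := by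
      intro h
      rw [h] at hy0eq
      simp at hy0eq
      exact absurd hy0eq.symm (ne_of_gt hc0)
    have hy0gt : 1 < y0 := lt_of_le_of_ne hy0mem.1 (Ne.symm hy0ne)
    refine ⟨y0, ⟨hy0gt, ?_⟩, ?_⟩
    · rw [key y0 (by linarith)]
      exact hy0eq
    · rintro z ⟨hz, hzeq⟩
      have hz1 : (1:ℝ) < z := hz
      rw [key z (by linarith)] at hzeq
      exact hmono.injOn (Set.mem_Ici.2 hz1.le) (Set.mem_Ici.2 hy0gt.le)
        (hzeq.trans hy0eq.symm)
  · intro y hy heq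
    apply main y hy
    rw [← key y (by have : (1:ℝ) < y := hy; linarith)]
    exact heq
end

section
/- (Theorem 2, scaling of the outage capacity for the unbounded path loss model.) Let α > 2, let M ≥ 1 be an integer, let ε ∈ (0,1) and ρ > 0, and set a = (α/2)(M−1). For each λ > 0, let y*(λ) be the unique y ∈ (1,∞) satisfying y^{a+1} − y^{a} = ( b(λ) / (−log ε) )^{α/2}, where b(λ) = (2λπ/α) Γ(2/α) ρ^{2/α}. Then log y*(λ) / log λ → α / (2(a+1)) as λ → ∞; in particular there exist constants 0 < c₁ ≤ c₂ and λ₀ > 1 such that c₁ log λ ≤ log y*(λ) ≤ c₂ log λ for all λ ≥ λ₀, i.e., the beam outage capacity C_out(ε) = log y*(λ) scales logarithmically in the user intensity λ. -/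
open Real Filter

set_option maxHeartbeats 1600000 in
/-- Theorem 2 (scaling for the unbounded path loss model): the outage capacity
`log y*(λ)` satisfies `log y*(λ) / log λ → α/(2(a+1))`, and in particular it is bounded
above and below by constant multiples of `log λ` for all large `λ`. -/
theorem outage_capacity_unbounded_scaling
    (α : ℝ) (hα : 2 < α) (M : ℕ) (hM : 1 ≤ M) (ε ρ : ℝ)
    (hε : ε ∈ Set.Ioo (0 : ℝ) 1) (hρ : 0 < ρ)
    (a : ℝ) (ha : a = α / 2 * ((M : ℝ) - 1))
    (b : ℝ → ℝ) (hb : ∀ l, b l = 2 * l * π / α * Real.Gamma (2 / α) * ρ ^ (2 / α))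
    (ystar : ℝ → ℝ)
    (hy : ∀ l, 0 < l → ystar l ∈ Set.Ioi (1 : ℝ) ∧
        ystar l ^ (a + 1) - ystar l ^ a = (b l / (-Real.log ε)) ^ (α / 2))
    (huniq : ∀ l, 0 < l → ∀ y ∈ Set.Ioi (1 : ℝ),
        y ^ (a + 1) - y ^ a = (b l / (-Real.log ε)) ^ (α / 2) → y = ystar l) :
    Tendsto (fun l => Real.log (ystar l) / Real.log l) atTop (nhds (α / (2 * (a + 1)))) ∧
    ∃ c₁ c₂ l₀ : ℝ, 0 < c₁ ∧ c₁ ≤ c₂ ∧ 1 < l₀ ∧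
      ∀ l ≥ l₀, c₁ * Real.log l ≤ Real.log (ystar l) ∧
        Real.log (ystar l) ≤ c₂ * Real.log l := by
  have hα0 : (0:ℝ) < α := by linarith
  have ha0 : 0 ≤ a := by
    have hM1 : (1:ℝ) ≤ (M:ℝ) := by exact_mod_cast hM
    rw [ha]; nlinarith
  have hD : (0:ℝ) < a + 1 := by linarith
  have hlε : 0 < -Real.log ε := by
    have := Real.log_neg hε.1 hε.2; linarith
  have hΓ : 0 < Real.Gamma (2/α) := Real.Gamma_pos_of_pos (by positivity)
  set C : ℝ := (2 * π / α * Real.Gamma (2/α) * ρ ^ (2/α)) / (-Real.log ε) with hCdef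
  have hC : 0 < C := by
    have : (0:ℝ) < ρ ^ (2/α) := Real.rpow_pos_of_pos hρ _
    have hπ := Real.pi_pos
    positivity
  have hCl : ∀ l : ℝ, b l / (-Real.log ε) = C * l := by
    intro l
    rw [hb, hCdef]
    field_simp
  set L : ℝ := α / (2 * (a + 1)) with hLdef
  have hL : 0 < L := by positivity
  -- key eventual inequality
  have key : ∀ᶠ l in atTop,
      (α/2) * (Real.log C + Real.log l) ≤ (a+1) * Real.log (ystar l) ∧
      (a+1) * Real.log (ystar l) ≤ Real.log 2 + (α/2) * (Real.log C + Real.log l) := by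
    have hF : Tendsto (fun l : ℝ => (C * l) ^ (α/2)) atTop atTop :=
      (tendsto_rpow_atTop (by positivity)).comp (tendsto_id.const_mul_atTop hC)
    filter_upwards [hF.eventually_ge_atTop ((2:ℝ) ^ a), eventually_gt_atTop (1:ℝ)]
      with l hF2 hl1
    have hl0 : (0:ℝ) < l := by linarith
    obtain ⟨hy1, heq⟩ := hy l hl0
    simp only [Set.mem_Ioi] at hy1
    rw [hCl l] at heq
    set y := ystar l with hydef
    have hy0 : (0:ℝ) < y := by linarith
    have hFl : (0:ℝ) < (C * l) ^ (α/2) := Real.rpow_pos_of_pos (by positivity) _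
    have hya : (0:ℝ) < y ^ a := Real.rpow_pos_of_pos hy0 _
    have heq' : y ^ a * (y - 1) = (C * l) ^ (α/2) := by
      rw [← heq]
      have : y ^ (a + 1) = y ^ a * y := by
        rw [Real.rpow_add_one hy0.ne' a]
      rw [this]; ring
    have hlogCl : Real.log (C * l) = Real.log C + Real.log l :=
      Real.log_mul hC.ne' hl0.ne'
    have hlogF : Real.log ((C * l) ^ (α/2)) = (α/2) * (Real.log C + Real.log l) := by
      rw [Real.log_rpow (by positivity), hlogCl]
    have hlogy : Real.log (y ^ (a+1)) = (a+1) * Real.log y := Real.log_rpow hy0 _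
    -- y ≥ 2
    have hy2 : 2 ≤ y := by
      by_contra h
      push_neg at h
      have h1 : y ^ a ≤ (2:ℝ) ^ a := Real.rpow_le_rpow hy0.le h.le ha0
      nlinarith
    constructor
    · -- lower bound
      have h1 : (C * l) ^ (α/2) ≤ y ^ (a+1) := by nlinarith
      have := Real.log_le_log hFl h1
      rw [hlogF, hlogy] at this
      exact this
    · -- upper bound
      have h1 : y ^ (a+1) ≤ 2 * ((C * l) ^ (α/2)) := by
        have : y ^ (a + 1) = y ^ a * y := by rw [Real.rpow_add_one hy0.ne' a]
        nlinarith
      have := Real.log_le_log (Real.rpow_pos_of_pos hy0 _) h1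
      rw [hlogy, Real.log_mul two_ne_zero hFl.ne', hlogF] at this
      linarith
  -- the tendsto statement
  set K : ℝ := ((α/2) * |Real.log C| + Real.log 2) / (a+1) with hKdef
  have hbound : ∀ᶠ l in atTop,
      |Real.log (ystar l) / Real.log l - L| ≤ K * (Real.log l)⁻¹ := by
    filter_upwards [key, eventually_gt_atTop (1:ℝ)] with l hkey hl1
    have hlog : 0 < Real.log l := Real.log_pos hl1
    have hnum : |(a+1) * Real.log (ystar l) - (α/2) * Real.log l|
        ≤ (α/2) * |Real.log C| + Real.log 2 := by
      rw [abs_le]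
      have h1 := hkey.1
      have h2 := hkey.2
      have hc1 : -|Real.log C| ≤ Real.log C := neg_abs_le _
      have hc2 : Real.log C ≤ |Real.log C| := le_abs_self _
      have hl2 : (0:ℝ) ≤ Real.log 2 := Real.log_nonneg one_le_two
      have hm1 := mul_le_mul_of_nonneg_left hc1 (by linarith : (0:ℝ) ≤ α/2)
      have hm2 := mul_le_mul_of_nonneg_left hc2 (by linarith : (0:ℝ) ≤ α/2)
      constructor <;> linarith
    have heqdiv : Real.log (ystar l) / Real.log l - L
        = ((a+1) * Real.log (ystar l) - (α/2) * Real.log l) / ((a+1) * Real.log l) := by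
      rw [hLdef]
      field_simp
    rw [heqdiv, abs_div, abs_of_pos (by positivity : (0:ℝ) < (a+1) * Real.log l)]
    have hKeq : K * (Real.log l)⁻¹
        = ((α/2) * |Real.log C| + Real.log 2) / ((a+1) * Real.log l) := by
      rw [hKdef, ← div_eq_mul_inv, div_div]
    rw [hKeq]
    gcongr
  have htend0 : Tendsto (fun l => Real.log (ystar l) / Real.log l - L) atTop (nhds 0) := by
    have hinv : Tendsto (fun l : ℝ => K * (Real.log l)⁻¹) atTop (nhds 0) := by
      have := Real.tendsto_log_atTop.inv_tendsto_atTop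
      simpa using this.const_mul K
    rw [tendsto_zero_iff_abs_tendsto_zero]
    exact squeeze_zero' (Eventually.of_forall fun l => abs_nonneg _) hbound
      (by simpa using hinv)
  have htend : Tendsto (fun l => Real.log (ystar l) / Real.log l) atTop (nhds L) := by
    have := htend0.add_const L
    simpa using this
  refine ⟨htend, ?_⟩
  have hIoo : ∀ᶠ l in atTop,
      Real.log (ystar l) / Real.log l ∈ Set.Ioo (L/2) (L+1) :=
    htend.eventually (Ioo_mem_nhds (by linarith) (by linarith))
  obtain ⟨N, hN⟩ := eventually_atTop.mp hIoo
  refine ⟨L/2, L+1, max N 2, by positivity, by linarith, lt_max_iff.mpr (Or.inr one_lt_two), ?_⟩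
  intro l hl
  have hl2 : (2:ℝ) ≤ l := le_trans (le_max_right N 2) hl
  have hlog : 0 < Real.log l := Real.log_pos (by linarith)
  obtain ⟨hg1, hg2⟩ := hN l (le_trans (le_max_left N 2) hl)
  exact ⟨le_of_lt ((lt_div_iff₀ hlog).mp hg1), le_of_lt ((div_lt_iff₀ hlog).mp hg2)⟩
end

section
/- (Theorem 3, outage capacity for the bounded path loss model: existence, uniqueness, and outage identity.) Let α > 2, let M ≥ 1 be an integer, let ε ∈ (0,1), λ > 0, ρ > 0, and set a = (α/2)(M−1) and b = (2λπ/α) Γ(2/α) ρ^{2/α}, where Γ is the Gamma function. Then there exists a unique y* ∈ (1, ∞) satisfying log( (y*)^{a} (y* − 1) ) + (α/(2ρ)) (y* − 1) = (α/2) log( b / (−log ε) ). Moreover, this y* satisfies exp( −(2λπ/α) e^{−(y*−1)/ρ} (y*)^{1−M} ( ρ / (y*−1) )^{2/α} Γ(2/α) ) = ε; that is, the rate log y* achieves outage probability exactly ε under the large-system beam outage distribution F(x) = exp( −(2λπ/α) e^{−x/ρ} (x+1)^{1−M} (ρ/x)^{2/α} Γ(2/α) ) of the bounded path loss model. -/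
open Real

/-- Theorem 3 (bounded path loss: existence, uniqueness, and outage identity). There is a
unique `y* ∈ (1,∞)` with `log(y*^a (y*-1)) + (α/(2ρ))(y*-1) = (α/2) log(b/(-log ε))`, and
this `y*` satisfies `exp(-(2λπ/α) e^{-(y*-1)/ρ} y*^{1-M} (ρ/(y*-1))^{2/α} Γ(2/α)) = ε`,
so the rate `log y*` achieves outage probability exactly `ε` in the large system limit. -/
theorem outage_capacity_bounded_root
    (α : ℝ) (hα : 2 < α) (M : ℕ) (hM : 1 ≤ M) (ε lam ρ : ℝ)
    (hε : ε ∈ Set.Ioo (0 : ℝ) 1) (hlam : 0 < lam) (hρ : 0 < ρ)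
    (a b : ℝ) (ha : a = α / 2 * ((M : ℝ) - 1))
    (hb : b = 2 * lam * π / α * Real.Gamma (2 / α) * ρ ^ (2 / α)) :
    (∃! y : ℝ, y ∈ Set.Ioi (1 : ℝ) ∧
        Real.log (y ^ a * (y - 1)) + α / (2 * ρ) * (y - 1)
          = α / 2 * Real.log (b / (-Real.log ε))) ∧
    ∀ y ∈ Set.Ioi (1 : ℝ),
      Real.log (y ^ a * (y - 1)) + α / (2 * ρ) * (y - 1)
          = α / 2 * Real.log (b / (-Real.log ε)) →
      Real.exp (-(2 * lam * π / α) * Real.exp (-(y - 1) / ρ) * y ^ ((1 : ℝ) - M) *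
          (ρ / (y - 1)) ^ (2 / α) * Real.Gamma (2 / α)) = ε := by
  obtain ⟨hε0, hε1⟩ := hε
  have hα0 : (0:ℝ) < α := by linarith
  have hαne : α ≠ 0 := ne_of_gt hα0
  have hL : 0 < -Real.log ε := by
    have := Real.log_neg hε0 hε1; linarith
  have hΓ : 0 < Real.Gamma (2 / α) := Real.Gamma_pos_of_pos (by positivity)
  have hbpos : 0 < b := by rw [hb]; positivity
  have hM1 : (1:ℝ) ≤ (M:ℝ) := by exact_mod_cast hM
  have ha0 : 0 ≤ a := by rw [ha]; nlinarith
  set c := α / 2 * Real.log (b / (-Real.log ε)) with hc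
  set f : ℝ → ℝ := fun y => a * Real.log y + Real.log (y - 1) + α / (2 * ρ) * (y - 1)
    with hf
  have hcoef : 0 < α / (2 * ρ) := by positivity
  have key : ∀ y : ℝ, 1 < y →
      Real.log (y ^ a * (y - 1)) + α / (2 * ρ) * (y - 1) = f y := by
    intro y hy
    have hy0 : 0 < y := by linarith
    have h1 : (0:ℝ) < y - 1 := by linarith
    simp only [hf]
    rw [Real.log_mul (by positivity) (ne_of_gt h1), Real.log_rpow hy0]
  have hmono : StrictMonoOn f (Set.Ioi 1) := by
    intro x hx z hz hxz
    simp only [Set.mem_Ioi] at hx hz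
    have h1 : a * Real.log x ≤ a * Real.log z :=
      mul_le_mul_of_nonneg_left (Real.log_le_log (by linarith) hxz.le) ha0
    have h2 : Real.log (x - 1) < Real.log (z - 1) :=
      Real.log_lt_log (by linarith) (by linarith)
    have h3 : α / (2*ρ) * (x-1) < α / (2*ρ) * (z-1) :=
      mul_lt_mul_of_pos_left (by linarith) hcoef
    simp only [hf]; linarith
  -- choose upper point
  set y2 := max 2 (1 + 2*ρ*(|c|+1)/α) with hy2def
  have hy2ge2 : (2:ℝ) ≤ y2 := le_max_left _ _
  have hy2big : 1 + 2*ρ*(|c|+1)/α ≤ y2 := le_max_right _ _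
  have hfy2 : c < f y2 := by
    have h1 : 0 ≤ a * Real.log y2 :=
      mul_nonneg ha0 (Real.log_nonneg (by linarith))
    have h2 : 0 ≤ Real.log (y2 - 1) := Real.log_nonneg (by linarith)
    have h3 : |c| + 1 ≤ α/(2*ρ) * (y2 - 1) := by
      have hstep : 2*ρ*(|c|+1)/α ≤ y2 - 1 := by linarith
      calc |c| + 1 = α/(2*ρ) * (2*ρ*(|c|+1)/α) := by field_simp
        _ ≤ α/(2*ρ) * (y2-1) := mul_le_mul_of_nonneg_left hstep hcoef.le
    have hcabs : c ≤ |c| := le_abs_self c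
    simp only [hf]; linarith
  -- choose lower point
  obtain ⟨s, hs⟩ : ∃ s : ℝ, s = c - a * Real.log 2 - α/(2*ρ) - 1 := ⟨_, rfl⟩
  obtain ⟨y1, hy1def⟩ : ∃ y : ℝ, y = 1 + min (1/2 : ℝ) (Real.exp s) := ⟨_, rfl⟩
  have hminpos : 0 < min (1/2 : ℝ) (Real.exp s) :=
    lt_min (by norm_num) (Real.exp_pos s)
  have hy1gt : 1 < y1 := by rw [hy1def]; linarith
  have hy1le : y1 ≤ 2 := by
    have : min (1/2 : ℝ) (Real.exp s) ≤ 1/2 := min_le_left _ _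
    rw [hy1def]; linarith
  have hfy1 : f y1 < c := by
    have h1 : a * Real.log y1 ≤ a * Real.log 2 :=
      mul_le_mul_of_nonneg_left (Real.log_le_log (by linarith) hy1le) ha0
    have h2 : Real.log (y1 - 1) ≤ s := by
      have hle : Real.log (y1 - 1) ≤ Real.log (Real.exp s) := by
        apply Real.log_le_log
        · rw [hy1def]; linarith
        · rw [hy1def]
          simpa using min_le_right (1/2 : ℝ) (Real.exp s)
      simpa [Real.log_exp] using hle
    have h3 : α/(2*ρ) * (y1 - 1) ≤ α/(2*ρ) := by
      apply mul_le_of_le_one_right hcoef.le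
      rw [hy1def]
      have : min (1/2 : ℝ) (Real.exp s) ≤ 1/2 := min_le_left _ _
      linarith
    have hstep : f y1 ≤ a * Real.log 2 + s + α/(2*ρ) := by
      simp only [hf]; linarith
    have hval : a * Real.log 2 + s + α/(2*ρ) = c - 1 := by rw [hs]; ring
    exact lt_of_le_of_lt (hstep.trans_eq hval) (sub_lt_self c one_pos)
  have hy1y2 : y1 ≤ y2 := by linarith
  have hcont : ContinuousOn f (Set.Icc y1 y2) := by
    apply continuousOn_of_forall_continuousAt
    intro x hx
    have hx1 : 1 < x := lt_of_lt_of_le hy1gt hx.1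
    have hx0 : x ≠ 0 := by intro h; rw [h] at hx1; linarith
    have hx10 : x - 1 ≠ 0 := by
      intro h
      have := sub_eq_zero.mp h
      linarith
    have c1 : ContinuousAt (fun y : ℝ => a * Real.log y) x :=
      continuousAt_const.mul (Real.continuousAt_log hx0)
    have c2 : ContinuousAt (fun y : ℝ => Real.log (y - 1)) x :=
      ContinuousAt.log ((continuous_sub_right (1:ℝ)).continuousAt) hx10
    have c3 : ContinuousAt (fun y : ℝ => α / (2*ρ) * (y - 1)) x :=
      (continuous_const.mul (continuous_sub_right (1:ℝ))).continuousAt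
    exact (c1.add c2).add c3
  obtain ⟨y, hymem, hfy⟩ :=
    intermediate_value_Icc hy1y2 hcont ⟨le_of_lt hfy1, le_of_lt hfy2⟩
  have hygt : 1 < y := lt_of_lt_of_le hy1gt hymem.1
  -- the second part as a general claim
  have part2 : ∀ z ∈ Set.Ioi (1 : ℝ),
      Real.log (z ^ a * (z - 1)) + α / (2 * ρ) * (z - 1)
          = α / 2 * Real.log (b / (-Real.log ε)) →
      Real.exp (-(2 * lam * π / α) * Real.exp (-(z - 1) / ρ) * z ^ ((1 : ℝ) - M) *
          (ρ / (z - 1)) ^ (2 / α) * Real.Gamma (2 / α)) = ε := by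
    intro z hz heq
    simp only [Set.mem_Ioi] at hz
    have hz0 : 0 < z := by linarith
    have ht : 0 < z - 1 := by linarith
    rw [key z hz] at heq
    simp only [hf] at heq
    rw [ha] at heq
    have e1 : α/2 * (2/α) = 1 := by field_simp
    have hbL : 0 < b / (-Real.log ε) := by positivity
    have hS'pos : 0 < z ^ ((M:ℝ)-1) * (z-1) ^ ((2:ℝ)/α) * Real.exp ((z-1)/ρ) := by
      positivity
    have hlog : α/2 * Real.log (z ^ ((M:ℝ)-1) * (z-1) ^ ((2:ℝ)/α) * Real.exp ((z-1)/ρ))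
        = α/2 * Real.log (b / (-Real.log ε)) := by
      rw [Real.log_mul (by positivity) (by positivity),
        Real.log_mul (by positivity) (by positivity),
        Real.log_rpow hz0, Real.log_rpow ht, Real.log_exp]
      linear_combination heq + Real.log (z-1) * e1
    have hlog2 : Real.log (z ^ ((M:ℝ)-1) * (z-1) ^ ((2:ℝ)/α) * Real.exp ((z-1)/ρ))
        = Real.log (b / (-Real.log ε)) :=
      mul_left_cancel₀ (by positivity : (α/2:ℝ) ≠ 0) hlog
    have hexp : z ^ ((M:ℝ)-1) * (z-1) ^ ((2:ℝ)/α) * Real.exp ((z-1)/ρ)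
        = b / (-Real.log ε) := by
      have h := congrArg Real.exp hlog2
      rwa [Real.exp_log hS'pos, Real.exp_log hbL] at h
    have hSpos := hS'pos
    have hKS : ((2 * lam * π / α) * Real.exp (-(z - 1) / ρ) * z ^ ((1 : ℝ) - M) *
        (ρ / (z - 1)) ^ ((2:ℝ) / α) * Real.Gamma (2 / α)) *
        (z ^ ((M:ℝ)-1) * (z-1) ^ ((2:ℝ)/α) * Real.exp ((z-1)/ρ)) = b := by
      have e2 : Real.exp (-(z-1)/ρ) * Real.exp ((z-1)/ρ) = 1 := by
        have e2' : -(z-1)/ρ + (z-1)/ρ = 0 := by ring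
        rw [← Real.exp_add, e2', Real.exp_zero]
      have e3 : z ^ ((1:ℝ) - M) * z ^ ((M:ℝ)-1) = 1 := by
        have e3' : (1:ℝ) - M + ((M:ℝ)-1) = 0 := by ring
        rw [← Real.rpow_add hz0, e3', Real.rpow_zero]
      have e4 : (ρ / (z-1)) ^ ((2:ℝ)/α) * (z-1) ^ ((2:ℝ)/α) = ρ ^ ((2:ℝ)/α) := by
        rw [Real.div_rpow hρ.le ht.le, div_mul_cancel₀]
        positivity
      calc ((2 * lam * π / α) * Real.exp (-(z - 1) / ρ) * z ^ ((1 : ℝ) - M) *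
            (ρ / (z - 1)) ^ ((2:ℝ) / α) * Real.Gamma (2 / α)) *
            (z ^ ((M:ℝ)-1) * (z-1) ^ ((2:ℝ)/α) * Real.exp ((z-1)/ρ))
          = (2*lam*π/α) * Real.Gamma (2/α) *
            (Real.exp (-(z-1)/ρ) * Real.exp ((z-1)/ρ)) *
            (z ^ ((1:ℝ) - M) * z ^ ((M:ℝ)-1)) *
            ((ρ / (z-1)) ^ ((2:ℝ)/α) * (z-1) ^ ((2:ℝ)/α)) := by ring
        _ = b := by rw [e2, e3, e4, hb]; ring
    have hLS : (-Real.log ε) * (z ^ ((M:ℝ)-1) * (z-1) ^ ((2:ℝ)/α) *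
        Real.exp ((z-1)/ρ)) = b := by
      rw [hexp, mul_comm, div_mul_cancel₀ _ (ne_of_gt hL)]
    have hKL : (2 * lam * π / α) * Real.exp (-(z - 1) / ρ) * z ^ ((1 : ℝ) - M) *
        (ρ / (z - 1)) ^ ((2:ℝ) / α) * Real.Gamma (2 / α) = -Real.log ε :=
      mul_right_cancel₀ (ne_of_gt hSpos) (hKS.trans hLS.symm)
    have harg : -(2 * lam * π / α) * Real.exp (-(z - 1) / ρ) * z ^ ((1 : ℝ) - M) *
        (ρ / (z - 1)) ^ (2 / α) * Real.Gamma (2 / α) = Real.log ε := by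
      have : -((2 * lam * π / α) * Real.exp (-(z - 1) / ρ) * z ^ ((1 : ℝ) - M) *
          (ρ / (z - 1)) ^ ((2:ℝ) / α) * Real.Gamma (2 / α)) = Real.log ε := by
        rw [hKL]; ring
      rw [← this]; ring
    rw [harg, Real.exp_log hε0]
  refine ⟨⟨y, ⟨Set.mem_Ioi.mpr hygt, by rw [key y hygt, hfy]⟩, ?_⟩, part2⟩
  rintro z ⟨hzmem, hzeq⟩
  have hz1 : 1 < z := Set.mem_Ioi.mp hzmem
  rw [key z hz1] at hzeq
  exact hmono.injOn (Set.mem_Ioi.mpr hz1) (Set.mem_Ioi.mpr hygt) (by rw [hzeq, hfy])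
end

section
/- (Refined asymptotics of the root for the bounded path loss model.) Let α > 2, let M ≥ 1 be an integer, let ε ∈ (0,1) and ρ > 0, and set a = (α/2)(M−1). For each λ > 0, let y*(λ) be the unique y ∈ (1,∞) satisfying log( y^{a}(y−1) ) + (α/(2ρ))(y−1) = (α/2) log( b(λ) / (−log ε) ), where b(λ) = (2λπ/α) Γ(2/α) ρ^{2/α}. Then there exist a constant C > 0 and λ₀ > e such that for all λ ≥ λ₀, | y*(λ) − ρ log λ | ≤ C log log λ; that is, y*(λ) = ρ log λ + O(log log λ) as λ → ∞. -/
open Real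

lemma Gmono (a α ρ : ℝ) (ha : 0 ≤ a) (hα : 0 < α) (hρ : 0 < ρ) {u v : ℝ}
    (hu : 1 < u) (huv : u < v) :
    a * Real.log u + Real.log (u-1) + α/(2*ρ)*(u-1)
      < a * Real.log v + Real.log (v-1) + α/(2*ρ)*(v-1) := by
  have h1 : a * Real.log u ≤ a * Real.log v :=
    mul_le_mul_of_nonneg_left (Real.log_le_log (by linarith) huv.le) ha
  have h2 : Real.log (u-1) < Real.log (v-1) :=
    Real.log_lt_log (by linarith) (by linarith)
  have h3 : α/(2*ρ)*(u-1) < α/(2*ρ)*(v-1) := by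
    have : 0 < α/(2*ρ) := by positivity
    nlinarith
  linarith

lemma loglin (C ρ L : ℝ) (hC : 0 < C) (hρ : 0 < ρ) (hL : (4*C/ρ)^2 ≤ L) :
    C * Real.log L ≤ ρ/2 * L := by
  have hL0 : 0 < L := lt_of_lt_of_le (by positivity) hL
  have hs : 4*C/ρ ≤ Real.sqrt L := by
    have := Real.sqrt_le_sqrt hL
    rwa [Real.sqrt_sq (by positivity)] at this
  have hlog : Real.log L ≤ 2 * Real.sqrt L := by
    have h1 : Real.log (Real.sqrt L) ≤ Real.sqrt L - 1 :=
      Real.log_le_sub_one_of_pos (Real.sqrt_pos.mpr hL0)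
    have h2 : Real.log (Real.sqrt L) = Real.log L / 2 := Real.log_sqrt hL0.le
    linarith
  have hsq : Real.sqrt L * Real.sqrt L = L := Real.mul_self_sqrt hL0.le
  have h4 : 2*C ≤ ρ/2 * Real.sqrt L := by
    have h5 : ρ/2 * (4*C/ρ) ≤ ρ/2 * Real.sqrt L :=
      mul_le_mul_of_nonneg_left hs (by positivity)
    have he : ρ/2*(4*C/ρ) = 2*C := by field_simp; ring
    linarith
  nlinarith [mul_le_mul_of_nonneg_right h4 (Real.sqrt_nonneg L),
    mul_le_mul_of_nonneg_left hlog hC.le]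

set_option maxHeartbeats 1000000 in
/-- Refined asymptotics of the root for the bounded path loss model:
`y*(λ) = ρ log λ + O(log log λ)` as `λ → ∞`. -/
theorem outage_capacity_bounded_root_asymptotics
    (α : ℝ) (hα : 2 < α) (M : ℕ) (hM : 1 ≤ M) (ε ρ : ℝ)
    (hε : ε ∈ Set.Ioo (0 : ℝ) 1) (hρ : 0 < ρ)
    (a : ℝ) (ha : a = α / 2 * ((M : ℝ) - 1))
    (b : ℝ → ℝ) (hb : ∀ l, b l = 2 * l * π / α * Real.Gamma (2 / α) * ρ ^ (2 / α))
    (ystar : ℝ → ℝ)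
    (hy : ∀ l, 0 < l → ystar l ∈ Set.Ioi (1 : ℝ) ∧
        Real.log (ystar l ^ a * (ystar l - 1)) + α / (2 * ρ) * (ystar l - 1)
          = α / 2 * Real.log (b l / (-Real.log ε)))
    (huniq : ∀ l, 0 < l → ∀ y ∈ Set.Ioi (1 : ℝ),
        Real.log (y ^ a * (y - 1)) + α / (2 * ρ) * (y - 1)
          = α / 2 * Real.log (b l / (-Real.log ε)) → y = ystar l) :
    ∃ C : ℝ, 0 < C ∧ ∃ l₀ : ℝ, Real.exp 1 < l₀ ∧
      ∀ l ≥ l₀, |ystar l - ρ * Real.log l| ≤ C * Real.log (Real.log l) := by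
  have hα0 : 0 < α := by linarith
  have hαne : α ≠ 0 := hα0.ne'
  have ha0 : 0 ≤ a := by
    have hM1 : (1:ℝ) ≤ (M:ℝ) := by exact_mod_cast hM
    rw [ha]; nlinarith
  have hlε : Real.log ε < 0 := Real.log_neg hε.1 hε.2
  have hlεne : -Real.log ε ≠ 0 := ne_of_gt (by linarith)
  obtain ⟨c, hc⟩ : ∃ x : ℝ, x = 2 * π / α * Real.Gamma (2 / α) * ρ ^ (2 / α) := ⟨_, rfl⟩
  have hcpos : 0 < c := by
    have h1 : 0 < Real.Gamma (2/α) := Real.Gamma_pos_of_pos (by positivity)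
    have h2 : (0:ℝ) < ρ ^ (2/α) := Real.rpow_pos_of_pos hρ _
    have hπ := Real.pi_pos
    rw [hc]; positivity
  obtain ⟨d, hd⟩ : ∃ x : ℝ, x = c / (-Real.log ε) := ⟨_, rfl⟩
  have hdpos : 0 < d := hd ▸ div_pos hcpos (by linarith)
  obtain ⟨K, hK⟩ : ∃ x : ℝ, x = |Real.log d| := ⟨_, rfl⟩
  have hK0 : 0 ≤ K := hK ▸ abs_nonneg _
  obtain ⟨C, hC⟩ : ∃ x : ℝ, x = 1 + ρ * K + (2*ρ/α) * (a+1) * (|Real.log (2*ρ)| + 1) := ⟨_, rfl⟩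
  have hthird : 0 ≤ (2*ρ/α) * (a+1) * (|Real.log (2*ρ)| + 1) := by positivity
  have hρK : 0 ≤ ρ * K := mul_nonneg hρ.le hK0
  have hCpos : 0 < C := by rw [hC]; linarith
  obtain ⟨T, hT⟩ : ∃ x : ℝ, x = max (max (Real.exp 1) ((4*C/ρ)^2)) (4/ρ) := ⟨_, rfl⟩
  have hTe : Real.exp 1 ≤ T := hT ▸ (le_max_left _ _).trans (le_max_left _ _)
  have hT1 : 1 < T := by
    have := Real.add_one_le_exp 1
    linarith
  refine ⟨C, hCpos, Real.exp T, Real.exp_lt_exp.mpr hT1, ?_⟩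
  intro l hl
  have hl0 : 0 < l := lt_of_lt_of_le (Real.exp_pos T) hl
  obtain ⟨L, hL⟩ : ∃ x : ℝ, x = Real.log l := ⟨_, rfl⟩
  obtain ⟨LL, hLL⟩ : ∃ x : ℝ, x = Real.log L := ⟨_, rfl⟩
  rw [← hL, ← hLL]
  have hLT : T ≤ L := by
    have h := Real.log_le_log (Real.exp_pos T) hl
    rw [Real.log_exp] at h
    linarith [hL ▸ h]
  have hLe : Real.exp 1 ≤ L := hTe.trans hLT
  have hL0 : 0 < L := lt_of_lt_of_le (Real.exp_pos 1) hLe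
  have hLL1 : 1 ≤ LL := by
    have h := Real.log_le_log (Real.exp_pos 1) hLe
    rw [Real.log_exp] at h
    linarith [hLL ▸ h]
  have hCLL : C * LL ≤ ρ/2 * L := by
    rw [hLL]
    exact loglin C ρ L hCpos hρ
      (le_trans (hT ▸ (le_max_right _ _).trans (le_max_left _ _)) hLT)
  have hL2 : 2 ≤ ρ/2 * L := by
    have h4 : 4/ρ ≤ L := (hT ▸ (le_max_right _ _ : 4/ρ ≤ _)).trans hLT
    have h5 : ρ/2 * (4/ρ) ≤ ρ/2 * L :=
      mul_le_mul_of_nonneg_left h4 (by positivity)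
    have he : ρ/2*(4/ρ) = 2 := by field_simp; ring
    linarith
  obtain ⟨hy1, heq⟩ := hy l hl0
  rw [Set.mem_Ioi] at hy1
  obtain ⟨y, hYdef⟩ : ∃ x : ℝ, x = ystar l := ⟨_, rfl⟩
  rw [← hYdef]
  rw [← hYdef] at hy1 heq
  have hy0 : 0 < y := by linarith
  have hlogsplit : Real.log (y ^ a * (y-1)) = a * Real.log y + Real.log (y-1) := by
    rw [Real.log_mul (Real.rpow_pos_of_pos hy0 a).ne' (ne_of_gt (by linarith : (0:ℝ) < y-1)),
      Real.log_rpow hy0]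
  have hbl : b l / (-Real.log ε) = l * d := by
    rw [hb l, hd, hc]; field_simp
  have hrhs : α/2 * Real.log (b l / (-Real.log ε)) = α/2*L + α/2*Real.log d := by
    rw [hbl, Real.log_mul hl0.ne' hdpos.ne', hL]; ring
  have heq' : a * Real.log y + Real.log (y-1) + α/(2*ρ)*(y-1)
      = α/2*L + α/2*Real.log d := by
    rw [← hlogsplit, heq, hrhs]
  obtain ⟨ym, hym⟩ : ∃ x : ℝ, x = ρ*L - C*LL := ⟨_, rfl⟩
  obtain ⟨yp, hyp⟩ : ∃ x : ℝ, x = ρ*L + C*LL := ⟨_, rfl⟩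
  have hym2 : 2 ≤ ym := by rw [hym]; linarith
  have hyptop : yp ≤ 2*ρ*L := by rw [hyp]; linarith
  have hymyp : ym ≤ yp := by
    have h0 : 0 ≤ C * LL := mul_nonneg hCpos.le (by linarith)
    rw [hym, hyp]; linarith
  -- upper bound: RHS ≤ G yp
  have hGyp : α/2*L + α/2*Real.log d
      ≤ a*Real.log yp + Real.log (yp-1) + α/(2*ρ)*(yp-1) := by
    have h1 : 0 ≤ a * Real.log yp :=
      mul_nonneg ha0 (Real.log_nonneg (by linarith))
    have h2 : 0 ≤ Real.log (yp-1) := Real.log_nonneg (by linarith)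
    have h3 : α/(2*ρ)*(yp-1) = α/2*L + α/(2*ρ)*(C*LL-1) := by
      rw [hyp]; field_simp; ring
    have h4 : ρ * K ≤ C*LL - 1 := by
      have e1 : 0 ≤ C*(LL-1) := mul_nonneg hCpos.le (by linarith)
      have e2 : C*LL - C = C*(LL-1) := by ring
      linarith
    have h5 : α/2 * Real.log d ≤ α/(2*ρ)*(C*LL-1) := by
      have hld : Real.log d ≤ K := hK ▸ le_abs_self _
      calc α/2*Real.log d ≤ α/2*K :=
            mul_le_mul_of_nonneg_left hld (by positivity)
        _ = α/(2*ρ)*(ρ*K) := by field_simp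
        _ ≤ α/(2*ρ)*(C*LL-1) := mul_le_mul_of_nonneg_left h4 (by positivity)
    linarith
  -- lower bound: G ym ≤ RHS
  have hGym : a*Real.log ym + Real.log (ym-1) + α/(2*ρ)*(ym-1)
      ≤ α/2*L + α/2*Real.log d := by
    have hlogym : Real.log ym ≤ |Real.log (2*ρ)| + LL := by
      have h1 : Real.log ym ≤ Real.log (2*ρ*L) :=
        Real.log_le_log (by linarith) (by linarith [hymyp])
      have h2 : Real.log (2*ρ*L) = Real.log (2*ρ) + Real.log L := by
        rw [Real.log_mul (by positivity) hL0.ne']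
      have h3 : Real.log (2*ρ) ≤ |Real.log (2*ρ)| := le_abs_self _
      rw [hLL]; linarith
    have hlogym1 : Real.log (ym-1) ≤ |Real.log (2*ρ)| + LL := by
      have h1 : Real.log (ym-1) ≤ Real.log ym :=
        Real.log_le_log (by linarith) (by linarith)
      linarith
    have habs0 : (0:ℝ) ≤ |Real.log (2*ρ)| := abs_nonneg _
    have hA : a*Real.log ym + Real.log (ym-1)
        ≤ (a+1)*(|Real.log (2*ρ)| + 1) * LL := by
      have h1 : a*Real.log ym ≤ a*(|Real.log (2*ρ)| + LL) :=
        mul_le_mul_of_nonneg_left hlogym ha0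
      have e1 : 0 ≤ (a+1) * abs (Real.log (2*ρ)) * (LL-1) :=
        mul_nonneg (mul_nonneg (by linarith) habs0) (by linarith)
      have e2 : (a+1)*(abs (Real.log (2*ρ)) + 1)*LL
          - (a*(abs (Real.log (2*ρ)) + LL) + (abs (Real.log (2*ρ)) + LL))
          = (a+1) * abs (Real.log (2*ρ)) * (LL-1) := by ring
      linarith
    have hlin : α/(2*ρ)*(ym-1) = α/2*L - α/(2*ρ)*C*LL - α/(2*ρ) := by
      rw [hym]; field_simp
    have h7 : α/(2*ρ)*C = α/(2*ρ) + α/2*K + (a+1)*(|Real.log (2*ρ)| + 1) := by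
      rw [hC]; field_simp
    have hstep : (a+1)*(|Real.log (2*ρ)| + 1)*LL - α/(2*ρ)*C*LL
        ≤ -(α/2*K + α/(2*ρ)) := by
      rw [h7]
      have hx : 0 ≤ α/2*K + α/(2*ρ) := by positivity
      have e1 : 0 ≤ (α/2*K + α/(2*ρ))*(LL-1) := mul_nonneg hx (by linarith)
      have e2 : (a+1)*(|Real.log (2*ρ)| + 1)*LL
          - (α/(2*ρ) + α/2*K + (a+1)*(|Real.log (2*ρ)| + 1))*LL
          + (α/2*K + α/(2*ρ)) = -((α/2*K + α/(2*ρ))*(LL-1)) := by ring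
      linarith
    have hKd : α/2*(-K) ≤ α/2*Real.log d := by
      refine mul_le_mul_of_nonneg_left ?_ (by positivity)
      rw [hK]; exact neg_abs_le _
    have hpos2 : (0:ℝ) ≤ α/(2*ρ) := by positivity
    linarith only [hA, hlin, hstep, hKd, hpos2]
  have hy_up : y ≤ yp := by
    by_contra h
    push_neg at h
    have := Gmono a α ρ ha0 hα0 hρ (show (1:ℝ) < yp by linarith) h
    linarith
  have hy_lo : ym ≤ y := by
    by_contra h
    push_neg at h
    have := Gmono a α ρ ha0 hα0 hρ hy1 h
    linarith
  rw [abs_le]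
  constructor <;> [linarith; linarith]
end

section
/- (Theorem 3, scaling of the outage capacity for the bounded path loss model.) Let α > 2, let M ≥ 1 be an integer, let ε ∈ (0,1) and ρ > 0, and set a = (α/2)(M−1). For each λ > 0, let y*(λ) be the unique y ∈ (1,∞) satisfying log( y^{a}(y−1) ) + (α/(2ρ))(y−1) = (α/2) log( b(λ) / (−log ε) ), where b(λ) = (2λπ/α) Γ(2/α) ρ^{2/α}. Then y*(λ) / (ρ log λ) → 1 as λ → ∞, and consequently log y*(λ) / log log λ → 1 as λ → ∞; i.e., the beam outage capacity C_out(ε) = log y*(λ) scales double-logarithmically in the user intensity λ. -/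
/-!
Since `b(λ)` is linear in `λ`, dividing the defining equation of `y*` by `α / (2ρ)` turns it into
`y + (2ρ/α) log (y^a (y - 1)) = ρ log λ + C`. The logarithmic term is `o(y)` and is at most a
multiple of `y`, so `y*(λ) → ∞` and then `y*(λ) ~ ρ log λ`. Logarithms preserve an asymptotic
equivalence to a function tending to infinity, so `log y*(λ) ~ log (ρ log λ) ~ log log λ`.
-/

open Real Filter Asymptotics

section PerturbedIdentity

variable {ι : Type*} {l : Filter ι} {y g : ι → ℝ} {ψ : ℝ → ℝ}

theorem tendsto_atTop_of_add_eq {K : ℝ} (hK : 0 < K) (hψ : ∀ t, 1 < t → t + ψ t ≤ K * t)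
    (hy : ∀ᶠ x in l, 1 < y x) (hg : Tendsto g l atTop) (h : ∀ᶠ x in l, y x + ψ (y x) = g x) :
    Tendsto y l atTop := by
  refine tendsto_atTop_mono' l ?_ (hg.atTop_div_const hK)
  filter_upwards [hy, h] with x hyx hx
  rw [div_le_iff₀ hK, ← hx, mul_comm]
  exact hψ _ hyx

theorem isEquivalent_of_add_eq (hψ : ψ =o[atTop] id) (hy : Tendsto y l atTop)
    (h : ∀ᶠ x in l, y x + ψ (y x) = g x) : y ~[l] g := by
  refine IsEquivalent.symm (IsLittleO.isEquivalent ?_)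
  refine (hψ.comp_tendsto hy).congr' ?_ EventuallyEq.rfl
  filter_upwards [h] with x hx
  simp [← hx]

end PerturbedIdentity

theorem log_rpow_mul_sub_one_le (a : ℝ) {t : ℝ} (ht : 1 < t) :
    log (t ^ a * (t - 1)) ≤ (|a| + 1) * t := by
  rw [log_mul (by positivity) (by linarith), log_rpow (by linarith)]
  have hlog : log t ≤ t := (log_le_sub_one_of_pos (by linarith)).trans (by linarith)
  have hlog' : log (t - 1) ≤ t := (log_le_sub_one_of_pos (by linarith)).trans (by linarith)
  nlinarith [le_abs_self a, neg_abs_le a, log_nonneg ht.le]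

theorem isLittleO_log_rpow_mul_sub_one (a : ℝ) :
    (fun t => log (t ^ a * (t - 1))) =o[atTop] id := by
  refine IsBigO.trans_isLittleO (IsBigO.of_bound (|a| + 1) ?_) isLittleO_log_id_atTop
  filter_upwards [eventually_ge_atTop 2] with t ht
  have hlogt : 0 ≤ log t := log_nonneg (by linarith)
  have hlog : 0 ≤ log (t - 1) := log_nonneg (by linarith)
  have hlog' : log (t - 1) ≤ log t := log_le_log (by linarith) (by linarith)
  rw [log_mul (by positivity) (by linarith), log_rpow (by linarith), norm_eq_abs, norm_eq_abs,
    abs_of_nonneg hlogt]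
  calc |a * log t + log (t - 1)| ≤ |a| * log t + log (t - 1) := by
        simpa [abs_mul, abs_of_nonneg hlog, abs_of_nonneg hlogt]
          using abs_add_le (a * log t) (log (t - 1))
    _ ≤ (|a| + 1) * log t := by nlinarith

theorem isEquivalent_log_const_mul {ι : Type*} {l : Filter ι} {f : ι → ℝ} {c : ℝ} (hc : 0 < c)
    (hf : Tendsto f l atTop) : (fun x => log (c * f x)) ~[l] fun x => log (f x) := by
  have hlog : Tendsto (fun x => log (f x)) l atTop := tendsto_log_atTop.comp hf
  refine (IsEquivalent.refl.const_add_of_norm_tendsto_atTop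
    (tendsto_norm_atTop_atTop.comp hlog) (c := log c)).congr_left ?_
  filter_upwards [hf.eventually_gt_atTop 0] with x hx
  rw [log_mul hc.ne' hx.ne']

theorem add_log_eq_of_outage_equation {α ρ a c l y : ℝ} (hα : α ≠ 0) (hρ : ρ ≠ 0) (hc : 0 < c)
    (hl : 0 < l)
    (h : log (y ^ a * (y - 1)) + α / (2 * ρ) * (y - 1) = α / 2 * log (c * l)) :
    y + 2 * ρ / α * log (y ^ a * (y - 1)) = ρ * log l + (ρ * log c + 1) := by
  rw [log_mul hc.ne' hl.ne'] at h
  linear_combination (norm := skip) (2 * ρ / α) * h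
  field_simp
  ring

theorem outage_capacity_bounded_scaling_general
    (α : ℝ) (hα : 2 < α) (ε ρ : ℝ)
    (hε : ε ∈ Set.Ioo (0 : ℝ) 1) (hρ : 0 < ρ)
    (a : ℝ)
    (b : ℝ → ℝ) (hb : ∀ l, b l = 2 * l * π / α * Real.Gamma (2 / α) * ρ ^ (2 / α))
    (ystar : ℝ → ℝ)
    (hy : ∀ l, 0 < l → ystar l ∈ Set.Ioi (1 : ℝ) ∧
        Real.log (ystar l ^ a * (ystar l - 1)) + α / (2 * ρ) * (ystar l - 1)
          = α / 2 * Real.log (b l / (-Real.log ε))) :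
    Tendsto (fun l => ystar l / (ρ * Real.log l)) atTop (nhds 1) ∧
    Tendsto (fun l => Real.log (ystar l) / Real.log (Real.log l)) atTop (nhds 1) := by
  have hα0 : 0 < α := by linarith
  set c := 2 * π / α * Gamma (2 / α) * ρ ^ (2 / α) / (-log ε)
  have hc : 0 < c := by
    have := neg_pos.2 (log_neg hε.1 hε.2)
    positivity
  set ψ := fun t => 2 * ρ / α * log (t ^ a * (t - 1))
  have hsol : ∀ᶠ l in atTop, ystar l + ψ (ystar l) = ρ * log l + (ρ * log c + 1) := by
    filter_upwards [eventually_gt_atTop 0] with l hl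
    have hbl : b l / (-log ε) = c * l := by rw [hb]; ring
    exact add_log_eq_of_outage_equation hα0.ne' hρ.ne' hc hl (hbl ▸ (hy l hl).2)
  have hρlog : Tendsto (fun l => ρ * log l) atTop atTop := tendsto_log_atTop.const_mul_atTop hρ
  have htop : Tendsto ystar atTop atTop :=
    tendsto_atTop_of_add_eq (K := 1 + 2 * ρ / α * (|a| + 1)) (by positivity)
      (fun t ht => by
        have := mul_le_mul_of_nonneg_left (log_rpow_mul_sub_one_le a ht)
          (by positivity : 0 ≤ 2 * ρ / α)
        linarith)
      ((eventually_gt_atTop 0).mono fun l hl => (hy l hl).1)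
      (tendsto_atTop_add_const_right _ _ hρlog) hsol
  have hequiv : ystar ~[atTop] fun l => ρ * log l :=
    (isEquivalent_of_add_eq ((isLittleO_log_rpow_mul_sub_one a).const_mul_left _) htop hsol).trans
      (IsEquivalent.refl.add_const_of_norm_tendsto_atTop (tendsto_norm_atTop_atTop.comp hρlog))
  constructor
  · exact (isEquivalent_iff_tendsto_one (hρlog.eventually_ne_atTop 0)).mp hequiv
  · refine (isEquivalent_iff_tendsto_one ?_).mp
      ((hequiv.log hρlog).trans (isEquivalent_log_const_mul hρ tendsto_log_atTop))
    exact (tendsto_log_atTop.comp tendsto_log_atTop).eventually_ne_atTop 0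

/-- Theorem 3 (scaling for the bounded path loss model): `y*(λ)/(ρ log λ) → 1` and hence
`log y*(λ) / log log λ → 1`, i.e. the outage capacity scales double-logarithmically in the
user intensity `λ`. -/
theorem outage_capacity_bounded_scaling
    (α : ℝ) (hα : 2 < α) (M : ℕ) (hM : 1 ≤ M) (ε ρ : ℝ)
    (hε : ε ∈ Set.Ioo (0 : ℝ) 1) (hρ : 0 < ρ)
    (a : ℝ) (ha : a = α / 2 * ((M : ℝ) - 1))
    (b : ℝ → ℝ) (hb : ∀ l, b l = 2 * l * π / α * Real.Gamma (2 / α) * ρ ^ (2 / α))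
    (ystar : ℝ → ℝ)
    (hy : ∀ l, 0 < l → ystar l ∈ Set.Ioi (1 : ℝ) ∧
        Real.log (ystar l ^ a * (ystar l - 1)) + α / (2 * ρ) * (ystar l - 1)
          = α / 2 * Real.log (b l / (-Real.log ε)))
    (huniq : ∀ l, 0 < l → ∀ y ∈ Set.Ioi (1 : ℝ),
        Real.log (y ^ a * (y - 1)) + α / (2 * ρ) * (y - 1)
          = α / 2 * Real.log (b l / (-Real.log ε)) → y = ystar l) :
    Tendsto (fun l => ystar l / (ρ * Real.log l)) atTop (nhds 1) ∧
    Tendsto (fun l => Real.log (ystar l) / Real.log (Real.log l)) atTop (nhds 1) :=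
  outage_capacity_bounded_scaling_general α hα ε ρ hε hρ a b hb ystar hy
end
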